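/- The map L₇(F) = F − 2F₈(F) is an involutive linear isometry of 𝒬𝒦𝔽 = {F ∈ (v𝔽)′ : F = F₄(F) = −F₅(F)}, commuting with the action on 𝔽 of every linear isometry A of V with A∘φ = φ∘A and Aξ = ξ, and it yields the orthogonal decomposition 𝒬𝒦𝔽 = 𝔽₃ ⊕ 𝔽₅, where 𝔽₃ = {F ∈ 𝔽 : F = F₈(F)} is the (−1)-eigenspace and 𝔽₅ = {F ∈ 𝔽 : F = F₄(F) = −F₅(F) and f*(F)(ξ) = 0} is the (+1)-eigenspace; the components of F ∈ 𝒬𝒦𝔽 in 𝔽₃ and 𝔽₅ are F₈(F) and (1/4){F₂(F)+F₄(F)−F₅(F)−F₆(F)−4F₈(F)}. -/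

import Mathlib

/-!
Write `τ(F) = f*(F)(ξ)` and `Φ(x,y,z) = η(z)⟨x,φy⟩ - η(y)⟨x,φz⟩`. Then `F₈(F) = -τ(F)/(2n) · Φ`,
`Φ ∈ 𝒬𝒦𝔽` and `τ(Φ) = -2n`, so `L₇(F) = F - (-τ(F)/n) · Φ` is the linear reflection along `Φ`
in the hyperplane `ker τ`, and `F₈` is the projection onto `ℝΦ` along `ker τ`. For `F` trilinear
and skew in its last two arguments, `⟨F, Φ⟩ = -2τ(F)`, so this projection is orthogonal and `L₇`
is an isometry. Both `τ` and `Φ` are invariant under isometries commuting with `φ` and fixing `ξ`.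
Finally, on `𝒬𝒦𝔽` one has `F(x,y,z) = η(y)F(x,ξ,z) - η(z)F(x,ξ,y)` with `F(·,ξ,·)` skew and
`φ`-invariant, so `F₂ = F₄ = id` and `F₅ = F₆ = -id` there; this gives the formula for the
`𝔽₅`-component.
-/

open scoped BigOperators RealInnerProductSpace

noncomputable section

variable {V : Type*} [NormedAddCommGroup V] [InnerProductSpace ℝ V]

/-- A map `V → V → V → ℝ` linear in each of its three arguments. -/
def Trilinear (F : V → V → V → ℝ) : Prop :=
  (∀ y z, IsLinearMap ℝ fun x => F x y z) ∧
  (∀ x z, IsLinearMap ℝ fun y => F x y z) ∧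
  (∀ x y, IsLinearMap ℝ fun z => F x y z)

/-- Almost contact metric structure `(φ, ξ, η, g)` on `V` with `dim V = 2n+1`. -/
def ACM (n : ℕ) (φ : V →ₗ[ℝ] V) (ξ : V) (η : V →ₗ[ℝ] ℝ) : Prop :=
  Module.finrank ℝ V = 2 * n + 1 ∧
  (∀ x, φ (φ x) = -x + η x • ξ) ∧
  φ ξ = 0 ∧
  (∀ x, η (φ x) = 0) ∧
  ⟪ξ, ξ⟫ = 1 ∧
  (∀ x y, ⟪φ x, φ y⟫ = ⟪x, y⟫ - η x * η y)

/-- Membership in the space `𝔽` of trilinear forms with the symmetries (1). -/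
def InF (φ : V →ₗ[ℝ] V) (ξ : V) (η : V →ₗ[ℝ] ℝ) (F : V → V → V → ℝ) : Prop :=
  Trilinear F ∧
  (∀ x y z, F x y z = -F x z y) ∧
  (∀ x y z, F x y z = -F x (φ y) (φ z) + η y * F x ξ z + η z * F x y ξ)

/-- `h x = -φ²x`. -/
def hMap (φ : V →ₗ[ℝ] V) (x : V) : V := -φ (φ x)

/-- `hF(x,y,z) = F(hx,hy,hz)`. -/
def hF (φ : V →ₗ[ℝ] V) (F : V → V → V → ℝ) : V → V → V → ℝ :=
  fun x y z => F (hMap φ x) (hMap φ y) (hMap φ z)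

def F1 (ξ : V) (η : V →ₗ[ℝ] ℝ) (F : V → V → V → ℝ) : V → V → V → ℝ :=
  fun x y z => η x * F ξ y z

def F2 (ξ : V) (η : V →ₗ[ℝ] ℝ) (F : V → V → V → ℝ) : V → V → V → ℝ :=
  fun x y z => η y * F x ξ z - η z * F x ξ y

def F3 (ξ : V) (η : V →ₗ[ℝ] ℝ) (F : V → V → V → ℝ) : V → V → V → ℝ :=
  fun x y z => η x * η y * F ξ ξ z - η x * η z * F ξ ξ y

def F4 (φ : V →ₗ[ℝ] V) (ξ : V) (η : V →ₗ[ℝ] ℝ) (F : V → V → V → ℝ) : V → V → V → ℝ :=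
  fun x y z => η y * F (φ x) ξ (φ z) - η z * F (φ x) ξ (φ y)

def F5 (ξ : V) (η : V →ₗ[ℝ] ℝ) (F : V → V → V → ℝ) : V → V → V → ℝ :=
  fun x y z => η y * F z ξ x - η z * F y ξ x

def F6 (φ : V →ₗ[ℝ] V) (ξ : V) (η : V →ₗ[ℝ] ℝ) (F : V → V → V → ℝ) : V → V → V → ℝ :=
  fun x y z => η y * F (φ z) ξ (φ x) - η z * F (φ y) ξ (φ x)

/-- `f(F)(z) = Σᵢ F(eᵢ, eᵢ, z)`. -/
def fTr {ι : Type*} [Fintype ι] (e : OrthonormalBasis ι ℝ V) (F : V → V → V → ℝ) (z : V) : ℝ :=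
  ∑ i, F (e i) (e i) z

/-- `f*(F)(z) = Σᵢ F(eᵢ, φ eᵢ, z)`. -/
def fTrStar {ι : Type*} [Fintype ι] (φ : V →ₗ[ℝ] V) (e : OrthonormalBasis ι ℝ V)
    (F : V → V → V → ℝ) (z : V) : ℝ :=
  ∑ i, F (e i) (φ (e i)) z

/-- The inner product on `𝔽`: `⟨F,G⟩ = Σ_{i,j,k} F(eᵢ,eⱼ,e_k) G(eᵢ,eⱼ,e_k)`. -/
def innerF {ι : Type*} [Fintype ι] (e : OrthonormalBasis ι ℝ V) (F G : V → V → V → ℝ) : ℝ :=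
  ∑ i, ∑ j, ∑ k, F (e i) (e j) (e k) * G (e i) (e j) (e k)

def F7 (n : ℕ) {ι : Type*} [Fintype ι] (e : OrthonormalBasis ι ℝ V) (ξ : V) (η : V →ₗ[ℝ] ℝ)
    (F : V → V → V → ℝ) : V → V → V → ℝ :=
  fun x y z => (1 / (2 * (n : ℝ))) * fTr e F ξ * (η z * ⟪x, y⟫ - η y * ⟪x, z⟫)

def F8 (n : ℕ) (φ : V →ₗ[ℝ] V) {ι : Type*} [Fintype ι] (e : OrthonormalBasis ι ℝ V) (ξ : V)
    (η : V →ₗ[ℝ] ℝ) (F : V → V → V → ℝ) : V → V → V → ℝ :=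
  fun x y z => -(1 / (2 * (n : ℝ))) * fTrStar φ e F ξ * (η z * ⟪x, φ y⟫ - η y * ⟪x, φ z⟫)

def F9 (n : ℕ) (φ : V →ₗ[ℝ] V) {ι : Type*} [Fintype ι] (e : OrthonormalBasis ι ℝ V)
    (F : V → V → V → ℝ) : V → V → V → ℝ :=
  fun x y z => (1 / (2 * ((n : ℝ) - 1))) *
    (⟪hMap φ x, hMap φ y⟫ * fTr e F z - ⟪hMap φ x, hMap φ z⟫ * fTr e F y
      - ⟪x, φ y⟫ * fTr e F (φ z) + ⟪x, φ z⟫ * fTr e F (φ y))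

def F10 (φ : V →ₗ[ℝ] V) (F : V → V → V → ℝ) : V → V → V → ℝ :=
  fun x y z => (1 / 2) * (F x y z + F (φ x) (φ y) z)

def F11 (φ : V →ₗ[ℝ] V) (F : V → V → V → ℝ) : V → V → V → ℝ :=
  fun x y z => (1 / 6) * (F x y z + F y z x + F z x y
    - F (φ x) (φ y) z - F (φ y) (φ z) x - F (φ z) (φ x) y)

def F12 (φ : V →ₗ[ℝ] V) (F : V → V → V → ℝ) : V → V → V → ℝ :=
  fun x y z => (1 / 2) * (F x y z - F (φ x) (φ y) z)

/-- The action of a linear isometry `A` of `V` on trilinear forms: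
`(A·F)(x,y,z) = F(A⁻¹x, A⁻¹y, A⁻¹z)`. -/
def actA (A : V ≃ₗᵢ[ℝ] V) (F : V → V → V → ℝ) : V → V → V → ℝ :=
  fun x y z => F (A.symm x) (A.symm y) (A.symm z)

def L1 (ξ : V) (η : V →ₗ[ℝ] ℝ) (F : V → V → V → ℝ) : V → V → V → ℝ :=
  fun x y z => F x y z - 2 * F3 ξ η F x y z

def L2 (ξ : V) (η : V →ₗ[ℝ] ℝ) (F : V → V → V → ℝ) : V → V → V → ℝ :=
  fun x y z => F x y z - 2 * (F1 ξ η F x y z + F2 ξ η F x y z)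

def L3 (ξ : V) (η : V →ₗ[ℝ] ℝ) (F : V → V → V → ℝ) : V → V → V → ℝ :=
  fun x y z => F2 ξ η F x y z - F1 ξ η F x y z

def L4 (φ : V →ₗ[ℝ] V) (ξ : V) (η : V →ₗ[ℝ] ℝ) (F : V → V → V → ℝ) : V → V → V → ℝ :=
  fun x y z => -F4 φ ξ η F x y z

def L5 (ξ : V) (η : V →ₗ[ℝ] ℝ) (F : V → V → V → ℝ) : V → V → V → ℝ :=
  fun x y z => -F5 ξ η F x y z

def L6 (n : ℕ) {ι : Type*} [Fintype ι] (e : OrthonormalBasis ι ℝ V) (ξ : V) (η : V →ₗ[ℝ] ℝ)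
    (F : V → V → V → ℝ) : V → V → V → ℝ :=
  fun x y z => F x y z - 2 * F7 n e ξ η F x y z

def L7 (n : ℕ) (φ : V →ₗ[ℝ] V) {ι : Type*} [Fintype ι] (e : OrthonormalBasis ι ℝ V) (ξ : V)
    (η : V →ₗ[ℝ] ℝ) (F : V → V → V → ℝ) : V → V → V → ℝ :=
  fun x y z => F x y z - 2 * F8 n φ e ξ η F x y z

/-- The subspace `𝔽₁ = {F ∈ 𝔽 : F = F₃(F)}`. -/
def MemF1sub (φ : V →ₗ[ℝ] V) (ξ : V) (η : V →ₗ[ℝ] ℝ) (F : V → V → V → ℝ) : Prop :=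
  InF φ ξ η F ∧ F = F3 ξ η F

/-- The subspace `v𝔽 = {F ∈ 𝔽 : hF = 0, ω(F) = 0}`. -/
def MemVF (φ : V →ₗ[ℝ] V) (ξ : V) (η : V →ₗ[ℝ] ℝ) (F : V → V → V → ℝ) : Prop :=
  InF φ ξ η F ∧ hF φ F = 0 ∧ ∀ z, F ξ ξ z = 0

/-- The subspace `h𝔽 = {F ∈ 𝔽 : F₁(F) = F₂(F) = 0}`. -/
def MemHF (φ : V →ₗ[ℝ] V) (ξ : V) (η : V →ₗ[ℝ] ℝ) (F : V → V → V → ℝ) : Prop :=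
  InF φ ξ η F ∧ F1 ξ η F = 0 ∧ F2 ξ η F = 0

/-- The subspace `(v𝔽)′ = {F ∈ 𝔽 : hF = 0, F(ξ,·,·) = 0}`. -/
def MemVF' (φ : V →ₗ[ℝ] V) (ξ : V) (η : V →ₗ[ℝ] ℝ) (F : V → V → V → ℝ) : Prop :=
  InF φ ξ η F ∧ hF φ F = 0 ∧ ∀ y z, F ξ y z = 0

/-- The subspace `𝔽₈ = {F ∈ 𝔽 : hF = 0, F(·,·,ξ) = 0}`. -/
def MemF8sub (φ : V →ₗ[ℝ] V) (ξ : V) (η : V →ₗ[ℝ] ℝ) (F : V → V → V → ℝ) : Prop :=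
  InF φ ξ η F ∧ hF φ F = 0 ∧ ∀ x y, F x y ξ = 0

/-- The subspace `𝒩 = {F ∈ (v𝔽)′ : F = F₄(F)}`. -/
def MemN (φ : V →ₗ[ℝ] V) (ξ : V) (η : V →ₗ[ℝ] ℝ) (F : V → V → V → ℝ) : Prop :=
  MemVF' φ ξ η F ∧ F = F4 φ ξ η F

/-- The subspace `𝒩̃ = {F ∈ (v𝔽)′ : F = -F₄(F)}`. -/
def MemNt (φ : V →ₗ[ℝ] V) (ξ : V) (η : V →ₗ[ℝ] ℝ) (F : V → V → V → ℝ) : Prop :=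
  MemVF' φ ξ η F ∧ F = -F4 φ ξ η F

/-- The subspace `𝒬𝒮𝔽 = {F ∈ (v𝔽)′ : F = F₄(F) = F₅(F)}`. -/
def MemQS (φ : V →ₗ[ℝ] V) (ξ : V) (η : V →ₗ[ℝ] ℝ) (F : V → V → V → ℝ) : Prop :=
  MemVF' φ ξ η F ∧ F = F4 φ ξ η F ∧ F = F5 ξ η F

/-- The subspace `𝒬𝒦𝔽 = {F ∈ (v𝔽)′ : F = F₄(F) = -F₅(F)}`. -/
def MemQK (φ : V →ₗ[ℝ] V) (ξ : V) (η : V →ₗ[ℝ] ℝ) (F : V → V → V → ℝ) : Prop :=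
  MemVF' φ ξ η F ∧ F = F4 φ ξ η F ∧ F = -F5 ξ η F

/-- The subspace `𝔽₆ = {F ∈ (v𝔽)′ : F = -F₄(F) = F₅(F)}`. -/
def MemF6sub (φ : V →ₗ[ℝ] V) (ξ : V) (η : V →ₗ[ℝ] ℝ) (F : V → V → V → ℝ) : Prop :=
  MemVF' φ ξ η F ∧ F = -F4 φ ξ η F ∧ F = F5 ξ η F

/-- The subspace `𝔽₇ = {F ∈ (v𝔽)′ : F = -F₄(F) = -F₅(F)}`. -/
def MemF7sub (φ : V →ₗ[ℝ] V) (ξ : V) (η : V →ₗ[ℝ] ℝ) (F : V → V → V → ℝ) : Prop :=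
  MemVF' φ ξ η F ∧ F = -F4 φ ξ η F ∧ F = -F5 ξ η F

/-- The subspace `𝔽₂ = {F ∈ 𝔽 : F = F₇(F)}`. -/
def MemF2sub (n : ℕ) {ι : Type*} [Fintype ι] (e : OrthonormalBasis ι ℝ V) (φ : V →ₗ[ℝ] V)
    (ξ : V) (η : V →ₗ[ℝ] ℝ) (F : V → V → V → ℝ) : Prop :=
  InF φ ξ η F ∧ F = F7 n e ξ η F

/-- The subspace `𝔽₃ = {F ∈ 𝔽 : F = F₈(F)}`. -/
def MemF3sub (n : ℕ) {ι : Type*} [Fintype ι] (e : OrthonormalBasis ι ℝ V) (φ : V →ₗ[ℝ] V)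
    (ξ : V) (η : V →ₗ[ℝ] ℝ) (F : V → V → V → ℝ) : Prop :=
  InF φ ξ η F ∧ F = F8 n φ e ξ η F

/-- The subspace `𝔽₄ = {F ∈ 𝔽 : F = F₄(F) = F₅(F), f(F)(ξ) = 0}`. -/
def MemF4sub (n : ℕ) {ι : Type*} [Fintype ι] (e : OrthonormalBasis ι ℝ V) (φ : V →ₗ[ℝ] V)
    (ξ : V) (η : V →ₗ[ℝ] ℝ) (F : V → V → V → ℝ) : Prop :=
  InF φ ξ η F ∧ F = F4 φ ξ η F ∧ F = F5 ξ η F ∧ fTr e F ξ = 0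

/-- The subspace `𝔽₅ = {F ∈ 𝔽 : F = F₄(F) = -F₅(F), f*(F)(ξ) = 0}`. -/
def MemF5sub (n : ℕ) {ι : Type*} [Fintype ι] (e : OrthonormalBasis ι ℝ V) (φ : V →ₗ[ℝ] V)
    (ξ : V) (η : V →ₗ[ℝ] ℝ) (F : V → V → V → ℝ) : Prop :=
  InF φ ξ η F ∧ F = F4 φ ξ η F ∧ F = -F5 ξ η F ∧ fTrStar φ e F ξ = 0

/-- The subspace `𝔽₄ = {F ∈ (v𝔽)′ : F = F₄(F) = F₅(F), f(F)(ξ) = 0}`. -/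
def MemF4sub' (n : ℕ) {ι : Type*} [Fintype ι] (e : OrthonormalBasis ι ℝ V) (φ : V →ₗ[ℝ] V)
    (ξ : V) (η : V →ₗ[ℝ] ℝ) (F : V → V → V → ℝ) : Prop :=
  MemVF' φ ξ η F ∧ F = F4 φ ξ η F ∧ F = F5 ξ η F ∧ fTr e F ξ = 0

/-- The subspace `𝔽₅ = {F ∈ (v𝔽)′ : F = F₄(F) = -F₅(F), f*(F)(ξ) = 0}`. -/
def MemF5sub' (n : ℕ) {ι : Type*} [Fintype ι] (e : OrthonormalBasis ι ℝ V) (φ : V →ₗ[ℝ] V)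
    (ξ : V) (η : V →ₗ[ℝ] ℝ) (F : V → V → V → ℝ) : Prop :=
  MemVF' φ ξ η F ∧ F = F4 φ ξ η F ∧ F = -F5 ξ η F ∧ fTrStar φ e F ξ = 0

/-- The subspace `𝔽₉ = {F ∈ 𝔽 : F = hF = F₉(F)}`. -/
def MemF9sub (n : ℕ) {ι : Type*} [Fintype ι] (e : OrthonormalBasis ι ℝ V) (φ : V →ₗ[ℝ] V)
    (ξ : V) (η : V →ₗ[ℝ] ℝ) (F : V → V → V → ℝ) : Prop :=
  InF φ ξ η F ∧ F = hF φ F ∧ F = F9 n φ e F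

/-- The subspace `𝔽₁₀ = {F ∈ 𝔽 : F = hF = F₁₀(F) - F₉(F)}`. -/
def MemF10sub (n : ℕ) {ι : Type*} [Fintype ι] (e : OrthonormalBasis ι ℝ V) (φ : V →ₗ[ℝ] V)
    (ξ : V) (η : V →ₗ[ℝ] ℝ) (F : V → V → V → ℝ) : Prop :=
  InF φ ξ η F ∧ F = hF φ F ∧ F = F10 φ F - F9 n φ e F

/-- The subspace `𝔽₁₁ = {F ∈ 𝔽 : F = hF = F₁₁(F)}`. -/
def MemF11sub (φ : V →ₗ[ℝ] V) (ξ : V) (η : V →ₗ[ℝ] ℝ) (F : V → V → V → ℝ) : Prop :=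
  InF φ ξ η F ∧ F = hF φ F ∧ F = F11 φ F

/-- The subspace `𝔽₁₂ = {F ∈ 𝔽 : F = hF = F₁₂(F) - F₁₁(F)}`. -/
def MemF12sub (φ : V →ₗ[ℝ] V) (ξ : V) (η : V →ₗ[ℝ] ℝ) (F : V → V → V → ℝ) : Prop :=
  InF φ ξ η F ∧ F = hF φ F ∧ F = F12 φ F - F11 φ F

namespace ACM

variable {n : ℕ} {φ : V →ₗ[ℝ] V} {ξ : V} {η : V →ₗ[ℝ] ℝ}

lemma phi_xi (hacm : ACM n φ ξ η) : φ ξ = 0 := hacm.2.2.1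

lemma eta_phi (hacm : ACM n φ ξ η) (x : V) : η (φ x) = 0 := hacm.2.2.2.1 x

lemma phi_phi (hacm : ACM n φ ξ η) (x : V) : φ (φ x) = -x + η x • ξ := hacm.2.1 x

lemma inner_xi_xi (hacm : ACM n φ ξ η) : ⟪ξ, ξ⟫ = 1 := hacm.2.2.2.2.1

lemma inner_phi_phi (hacm : ACM n φ ξ η) (x y : V) : ⟪φ x, φ y⟫ = ⟪x, y⟫ - η x * η y :=
  hacm.2.2.2.2.2 x y

lemma eta_xi (hacm : ACM n φ ξ η) : η ξ = 1 := by
  have h : η ξ • ξ = ξ := by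
    have := hacm.phi_phi ξ
    rw [hacm.phi_xi, map_zero] at this
    linear_combination (norm := module) -this
  simpa only [real_inner_smul_left, hacm.inner_xi_xi, mul_one] using congrArg (⟪·, ξ⟫) h

lemma eta_eq_inner (hacm : ACM n φ ξ η) (x : V) : η x = ⟪x, ξ⟫ := by
  have := hacm.inner_phi_phi x ξ
  rw [hacm.phi_xi, inner_zero_right, hacm.eta_xi, mul_one] at this
  linarith

lemma inner_xi_phi (hacm : ACM n φ ξ η) (x : V) : ⟪ξ, φ x⟫ = 0 := by
  rw [real_inner_comm, ← hacm.eta_eq_inner, hacm.eta_phi]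

lemma inner_phi_left (hacm : ACM n φ ξ η) (x y : V) : ⟪φ x, y⟫ = -⟪x, φ y⟫ := by
  have h := hacm.inner_phi_phi x (φ y)
  rw [hacm.phi_phi y, hacm.eta_phi, mul_zero, sub_zero, inner_add_right, inner_neg_right,
    real_inner_smul_right, ← hacm.eta_eq_inner, hacm.eta_phi, mul_zero, add_zero] at h
  linarith

lemma inner_phi_swap (hacm : ACM n φ ξ η) (x y : V) : ⟪x, φ y⟫ = -⟪y, φ x⟫ := by
  rw [← hacm.inner_phi_left, real_inner_comm]

end ACM

section OrthonormalBasis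

variable {ι ι' : Type*} [Fintype ι] [Fintype ι']

lemma OrthonormalBasis.sum_inner_mul_apply (e : OrthonormalBasis ι ℝ V) {g : V → ℝ}
    (hg : IsLinearMap ℝ g) (x : V) : ∑ i, ⟪e i, x⟫ * g (e i) = g x := by
  conv_rhs => rw [← e.sum_repr' x, ← hg.mk'_apply, map_sum]
  simp only [map_smul, IsLinearMap.mk'_apply, smul_eq_mul]

lemma OrthonormalBasis.sum_apply_skew_left (e : OrthonormalBasis ι ℝ V) {f : V → V → ℝ}
    (hf₁ : ∀ y, IsLinearMap ℝ (f · y)) (hf₂ : ∀ x, IsLinearMap ℝ (f x)) {T : V →ₗ[ℝ] V}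
    (hT : ∀ x y, ⟪T x, y⟫ = -⟪x, T y⟫) :
    ∑ i, f (T (e i)) (e i) = -∑ i, f (e i) (T (e i)) := by
  calc ∑ j, f (T (e j)) (e j)
      = ∑ j, ∑ k, ⟪e k, T (e j)⟫ * f (e k) (e j) := by
        simp only [e.sum_inner_mul_apply (hf₁ _)]
    _ = -∑ k, ∑ j, ⟪e j, T (e k)⟫ * f (e k) (e j) := by
        rw [Finset.sum_comm, ← Finset.sum_neg_distrib]
        refine Finset.sum_congr rfl fun k _ => ?_
        rw [← Finset.sum_neg_distrib]
        refine Finset.sum_congr rfl fun j _ => ?_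
        rw [real_inner_comm, hT, neg_mul]
    _ = -∑ k, f (e k) (T (e k)) := by
        simp only [e.sum_inner_mul_apply (hf₂ _)]

lemma OrthonormalBasis.sum_apply_self_eq (e : OrthonormalBasis ι ℝ V)
    (e' : OrthonormalBasis ι' ℝ V) {f : V → V → ℝ}
    (hf₁ : ∀ y, IsLinearMap ℝ (f · y)) (hf₂ : ∀ x, IsLinearMap ℝ (f x)) :
    ∑ i, f (e' i) (e' i) = ∑ j, f (e j) (e j) := by
  calc ∑ i, f (e' i) (e' i)
      = ∑ i, ∑ k, ∑ j, ⟪e k, e' i⟫ * ⟪e j, e' i⟫ * f (e j) (e k) := by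
        simp only [mul_assoc, ← Finset.mul_sum, e.sum_inner_mul_apply (hf₁ _),
          e.sum_inner_mul_apply (hf₂ _)]
    _ = ∑ k, ∑ j, ⟪e j, e k⟫ * f (e j) (e k) := by
        rw [Finset.sum_comm]
        refine Finset.sum_congr rfl fun k _ => ?_
        rw [Finset.sum_comm]
        refine Finset.sum_congr rfl fun j _ => ?_
        rw [← Finset.sum_mul, ← e'.sum_inner_mul_inner (e j) (e k)]
        simp only [real_inner_comm (e k), mul_comm]
    _ = ∑ k, f (e k) (e k) := by
        simp only [e.sum_inner_mul_apply (hf₁ _)]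

end OrthonormalBasis

section Closure

variable {φ : V →ₗ[ℝ] V} {ξ : V} {η : V →ₗ[ℝ] ℝ} {F G : V → V → V → ℝ}

lemma Trilinear.add (hF : Trilinear F) (hG : Trilinear G) : Trilinear (F + G) :=
  ⟨fun y z => ((hF.1 y z).mk' _ + (hG.1 y z).mk' _).isLinear,
    fun x z => ((hF.2.1 x z).mk' _ + (hG.2.1 x z).mk' _).isLinear,
    fun x y => ((hF.2.2 x y).mk' _ + (hG.2.2 x y).mk' _).isLinear⟩

lemma Trilinear.smul (c : ℝ) (hF : Trilinear F) : Trilinear (c • F) :=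
  ⟨fun y z => (c • (hF.1 y z).mk' _).isLinear, fun x z => (c • (hF.2.1 x z).mk' _).isLinear,
    fun x y => (c • (hF.2.2 x y).mk' _).isLinear⟩

lemma F4_add : F4 φ ξ η (F + G) = F4 φ ξ η F + F4 φ ξ η G := by
  funext x y z; simp only [F4, Pi.add_apply]; ring

lemma F4_smul (c : ℝ) : F4 φ ξ η (c • F) = c • F4 φ ξ η F := by
  funext x y z; simp only [F4, Pi.smul_apply, smul_eq_mul]; ring

lemma F5_add : F5 ξ η (F + G) = F5 ξ η F + F5 ξ η G := by
  funext x y z; simp only [F5, Pi.add_apply]; ring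

lemma F5_smul (c : ℝ) : F5 ξ η (c • F) = c • F5 ξ η F := by
  funext x y z; simp only [F5, Pi.smul_apply, smul_eq_mul]; ring

lemma MemQK.add (hF : MemQK φ ξ η F) (hG : MemQK φ ξ η G) : MemQK φ ξ η (F + G) := by
  obtain ⟨⟨⟨hFt, hFa, hFs⟩, hFh, hFξ⟩, hF4, hF5⟩ := hF
  obtain ⟨⟨⟨hGt, hGa, hGs⟩, hGh, hGξ⟩, hG4, hG5⟩ := hG
  refine ⟨⟨⟨hFt.add hGt, fun x y z => ?_, fun x y z => ?_⟩, ?_, fun y z => ?_⟩, ?_, ?_⟩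
  · simp only [Pi.add_apply]; linear_combination hFa x y z + hGa x y z
  · simp only [Pi.add_apply]; linear_combination hFs x y z + hGs x y z
  · change hF φ F + hF φ G = 0; rw [hFh, hGh, add_zero]
  · simp only [Pi.add_apply, hFξ, hGξ, add_zero]
  · rw [F4_add, ← hF4, ← hG4]
  · rw [F5_add, neg_add, ← hF5, ← hG5]

lemma MemQK.smul (c : ℝ) (hF : MemQK φ ξ η F) : MemQK φ ξ η (c • F) := by
  obtain ⟨⟨⟨hFt, hFa, hFs⟩, hFh, hFξ⟩, hF4, hF5⟩ := hF
  refine ⟨⟨⟨hFt.smul c, fun x y z => ?_, fun x y z => ?_⟩, ?_, fun y z => ?_⟩, ?_, ?_⟩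
  · simp only [Pi.smul_apply, smul_eq_mul]; linear_combination c * hFa x y z
  · simp only [Pi.smul_apply, smul_eq_mul]; linear_combination c * hFs x y z
  · change c • hF φ F = 0; rw [hFh, smul_zero]
  · simp only [Pi.smul_apply, hFξ, smul_zero]
  · rw [F4_smul, ← hF4]
  · rw [F5_smul, ← smul_neg, ← hF5]

end Closure

namespace MemQK

variable {n : ℕ} {φ : V →ₗ[ℝ] V} {ξ : V} {η : V →ₗ[ℝ] ℝ} {F : V → V → V → ℝ}

lemma apply_phi_xi_phi (hF : MemQK φ ξ η F) (hacm : ACM n φ ξ η) (x z : V) :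
    F (φ x) ξ (φ z) = F x ξ z := by
  have h := congrFun₃ hF.2.1 x ξ z
  simp only [F4, hacm.eta_xi, hacm.phi_xi, (hF.1.1.1.2.2 (φ x) ξ).map_zero] at h
  linarith

lemma apply_xi_swap (hF : MemQK φ ξ η F) (hacm : ACM n φ ξ η) (x z : V) :
    F z ξ x = -F x ξ z := by
  have h := congrFun₃ hF.2.2 x ξ z
  simp only [Pi.neg_apply, F5, hacm.eta_xi, hF.1.2.2] at h
  linarith

lemma apply_eq (hF : MemQK φ ξ η F) (hacm : ACM n φ ξ η) (x y z : V) :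
    F x y z = η y * F x ξ z - η z * F x ξ y := by
  rw [congrFun₃ hF.2.1 x y z, F4, hF.apply_phi_xi_phi hacm, hF.apply_phi_xi_phi hacm]

lemma quarter_combination_eq (hF : MemQK φ ξ η F) (hacm : ACM n φ ξ η)
    (P : V → V → V → ℝ) :
    (fun x y z => (1 / 4) * (F2 ξ η F x y z + F4 φ ξ η F x y z - F5 ξ η F x y z -
      F6 φ ξ η F x y z - 4 * P x y z)) = F - P := by
  funext x y z
  rw [← congrFun₃ hF.2.1 x y z]
  simp only [F2, F5, F6, Pi.sub_apply, hF.apply_phi_xi_phi hacm, hF.apply_xi_swap hacm z,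
    hF.apply_xi_swap hacm y, hF.apply_eq hacm x y z]
  ring

end MemQK

def etaPhiForm (φ : V →ₗ[ℝ] V) (η : V →ₗ[ℝ] ℝ) : V → V → V → ℝ :=
  fun x y z => η z * ⟪x, φ y⟫ - η y * ⟪x, φ z⟫

section EtaPhiForm

variable {n : ℕ} {φ : V →ₗ[ℝ] V} {ξ : V} {η : V →ₗ[ℝ] ℝ}

lemma trilinear_etaPhiForm : Trilinear (etaPhiForm φ η) := by
  refine ⟨fun y z => ⟨?_, ?_⟩, fun x z => ⟨?_, ?_⟩, fun x y => ⟨?_, ?_⟩⟩ <;> intros <;>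
    simp only [etaPhiForm, inner_add_left, inner_add_right, real_inner_smul_left,
      real_inner_smul_right, map_add, map_smul, smul_eq_mul] <;> ring

lemma memQK_etaPhiForm (hacm : ACM n φ ξ η) : MemQK φ ξ η (etaPhiForm φ η) := by
  refine ⟨⟨⟨trilinear_etaPhiForm, fun x y z => ?_, fun x y z => ?_⟩, ?_, fun y z => ?_⟩, ?_, ?_⟩
  · simp only [etaPhiForm]; ring
  · simp only [etaPhiForm, hacm.eta_phi, hacm.phi_xi, hacm.eta_xi, inner_zero_right]; ring
  · funext x y z
    simp [hF, hMap, etaPhiForm, hacm.eta_phi]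
  · simp only [etaPhiForm, hacm.inner_xi_phi, mul_zero, sub_zero]
  · funext x y z
    simp only [F4, etaPhiForm, hacm.eta_phi, hacm.phi_xi, hacm.eta_xi, inner_zero_right,
      hacm.inner_phi_phi]
    ring
  · funext x y z
    simp only [Pi.neg_apply, F5, etaPhiForm, hacm.phi_xi, hacm.eta_xi, inner_zero_right,
      hacm.inner_phi_swap z, hacm.inner_phi_swap y]
    ring

lemma fTrStar_etaPhiForm (hacm : ACM n φ ξ η) {ι : Type*} [Fintype ι]
    (e : OrthonormalBasis ι ℝ V) : fTrStar φ e (etaPhiForm φ η) ξ = -(2 * n) := by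
  have hterm : ∀ i, etaPhiForm φ η (e i) (φ (e i)) ξ = -1 + ⟪ξ, e i⟫ * ⟪e i, ξ⟫ := fun i => by
    simp only [etaPhiForm, hacm.eta_xi, hacm.eta_phi, hacm.phi_phi (e i), inner_add_right,
      inner_neg_right, real_inner_smul_right, real_inner_self_eq_norm_sq, e.orthonormal.1 i,
      hacm.eta_eq_inner (e i), real_inner_comm ξ (e i)]
    ring
  have hcard : (Fintype.card ι : ℝ) = 2 * n + 1 := by
    rw [← Module.finrank_eq_card_basis e.toBasis, hacm.1]; push_cast; ring
  rw [fTrStar, Finset.sum_congr rfl fun i _ => hterm i, Finset.sum_add_distrib,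
    e.sum_inner_mul_inner, hacm.inner_xi_xi, Finset.sum_const, Finset.card_univ, nsmul_eq_mul,
    hcard]
  ring

lemma actA_etaPhiForm (hacm : ACM n φ ξ η) {A : V ≃ₗᵢ[ℝ] V} (hAφ : ∀ x, A (φ x) = φ (A x))
    (hAξ : A ξ = ξ) : actA A (etaPhiForm φ η) = etaPhiForm φ η := by
  have hη : ∀ x, η (A.symm x) = η x := fun x => by
    rw [hacm.eta_eq_inner, hacm.eta_eq_inner, ← A.inner_map_map, A.apply_symm_apply, hAξ]
  have hφ : ∀ x y, ⟪A.symm x, φ (A.symm y)⟫ = ⟪x, φ y⟫ := fun x y => by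
    rw [← A.inner_map_map, hAφ, A.apply_symm_apply, A.apply_symm_apply]
  funext x y z
  simp only [actA, etaPhiForm, hη, hφ]

end EtaPhiForm

section InnerF

variable {ι : Type*} [Fintype ι] (e : OrthonormalBasis ι ℝ V)

lemma innerF_comm (F G : V → V → V → ℝ) : innerF e F G = innerF e G F := by
  simp only [innerF, mul_comm]

lemma innerF_smul_left (c : ℝ) (F G : V → V → V → ℝ) :
    innerF e (c • F) G = c * innerF e F G := by
  simp only [innerF, Pi.smul_apply, smul_eq_mul, Finset.mul_sum, mul_assoc]

lemma innerF_sub_smul_sub_smul (F G P : V → V → V → ℝ) (a b : ℝ) :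
    innerF e (F - a • P) (G - b • P) =
      innerF e F G - b * innerF e F P - a * innerF e P G + a * b * innerF e P P := by
  simp only [innerF, Finset.mul_sum, ← Finset.sum_sub_distrib, ← Finset.sum_add_distrib,
    Pi.sub_apply, Pi.smul_apply, smul_eq_mul]
  refine Finset.sum_congr rfl fun i _ => Finset.sum_congr rfl fun j _ =>
    Finset.sum_congr rfl fun k _ => ?_
  ring

variable {n : ℕ} {φ : V →ₗ[ℝ] V} {ξ : V} {η : V →ₗ[ℝ] ℝ}

lemma innerF_etaPhiForm (hacm : ACM n φ ξ η) {F : V → V → V → ℝ} (hF : Trilinear F)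
    (hskew : ∀ x y z, F x y z = -F x z y) :
    innerF e F (etaPhiForm φ η) = -2 * fTrStar φ e F ξ := by
  have hξ : ∀ i j, ∑ k, F (e i) (e j) (e k) * η (e k) = F (e i) (e j) ξ := fun i j => by
    simpa only [hacm.eta_eq_inner, mul_comm] using e.sum_inner_mul_apply (hF.2.2 (e i) (e j)) ξ
  have hswap : ∑ i, ∑ j, ∑ k, F (e i) (e j) (e k) * (η (e j) * ⟪e i, φ (e k)⟫) =
      -∑ i, ∑ j, ∑ k, F (e i) (e j) (e k) * (η (e k) * ⟪e i, φ (e j)⟫) := by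
    simp only [← Finset.sum_neg_distrib]
    refine Finset.sum_congr rfl fun i _ => ?_
    rw [Finset.sum_comm]
    refine Finset.sum_congr rfl fun j _ => Finset.sum_congr rfl fun k _ => ?_
    rw [hskew, neg_mul]
  calc innerF e F (etaPhiForm φ η)
      = 2 * ∑ j, ∑ i, ⟪e i, φ (e j)⟫ * F (e i) (e j) ξ := by
        rw [innerF]
        simp only [etaPhiForm, mul_sub, Finset.sum_sub_distrib, hswap, sub_neg_eq_add]
        rw [← two_mul, Finset.sum_comm]
        refine congrArg _ (Finset.sum_congr rfl fun j _ => Finset.sum_congr rfl fun i _ => ?_)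
        rw [← hξ, Finset.mul_sum]
        exact Finset.sum_congr rfl fun k _ => by ring
    _ = 2 * ∑ j, F (φ (e j)) (e j) ξ := by
        simp only [e.sum_inner_mul_apply (hF.1 (e _) ξ)]
    _ = -2 * fTrStar φ e F ξ := by
        rw [e.sum_apply_skew_left (f := (F · · ξ)) (fun y => hF.1 y ξ) (fun x => hF.2.1 x ξ)
          hacm.inner_phi_left, fTrStar]
        ring

end InnerF

section L7

variable {n : ℕ} {φ : V →ₗ[ℝ] V} {ξ : V} {η : V →ₗ[ℝ] ℝ} {ι : Type*} [Fintype ι]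
  {e : OrthonormalBasis ι ℝ V} {F G : V → V → V → ℝ}

def fTrStarXi (φ : V →ₗ[ℝ] V) (e : OrthonormalBasis ι ℝ V) (ξ : V) :
    Module.Dual ℝ (V → V → V → ℝ) where
  toFun F := fTrStar φ e F ξ
  map_add' _ _ := Finset.sum_add_distrib
  map_smul' _ _ := Finset.mul_sum _ _ _ |>.symm

@[simp]
lemma fTrStarXi_apply : fTrStarXi φ e ξ F = fTrStar φ e F ξ := rfl

lemma F8_eq_smul :
    F8 n φ e ξ η F = (-(1 / (2 * (n : ℝ))) * fTrStar φ e F ξ) • etaPhiForm φ η := rfl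

lemma L7_eq : L7 n φ e ξ η F = F - (-(n : ℝ)⁻¹ * fTrStar φ e F ξ) • etaPhiForm φ η := by
  funext x y z
  simp only [L7, F8, etaPhiForm, Pi.sub_apply, Pi.smul_apply, smul_eq_mul]
  ring

lemma fTrStarXi_etaPhiForm (hacm : ACM n φ ξ η) (hn : n ≠ 0) :
    (-(n : ℝ)⁻¹ • fTrStarXi φ e ξ) (etaPhiForm φ η) = 2 := by
  rw [LinearMap.smul_apply, fTrStarXi_apply, fTrStar_etaPhiForm hacm, smul_eq_mul]
  field_simp

lemma L7_eq_reflection (h : (-(n : ℝ)⁻¹ • fTrStarXi φ e ξ) (etaPhiForm φ η) = 2) :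
    L7 n φ e ξ η F = Module.reflection h F := by
  rw [L7_eq, Module.reflection_apply, LinearMap.smul_apply, fTrStarXi_apply, smul_eq_mul]

lemma fTrStar_F8 (hacm : ACM n φ ξ η) (hn : n ≠ 0) :
    fTrStar φ e (F8 n φ e ξ η F) ξ = fTrStar φ e F ξ := by
  rw [← fTrStarXi_apply, F8_eq_smul, map_smul, fTrStarXi_apply, fTrStar_etaPhiForm hacm,
    smul_eq_mul]
  field_simp

lemma memQK_F8 (hacm : ACM n φ ξ η) : MemQK φ ξ η (F8 n φ e ξ η F) :=
  (memQK_etaPhiForm hacm).smul _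

lemma memF3sub_F8 (hacm : ACM n φ ξ η) (hn : n ≠ 0) :
    MemF3sub n e φ ξ η (F8 n φ e ξ η F) := by
  refine ⟨(memQK_F8 hacm).1.1, ?_⟩
  conv_rhs => rw [F8_eq_smul, fTrStar_F8 hacm hn]
  rfl

lemma memF5sub_sub_F8 (hacm : ACM n φ ξ η) (hn : n ≠ 0) (hF : MemQK φ ξ η F) :
    MemF5sub n e φ ξ η (F - F8 n φ e ξ η F) := by
  obtain ⟨⟨hInF, -⟩, h4, h5⟩ := hF.add ((memQK_F8 (e := e) (F := F) hacm).smul (-1))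
  rw [neg_one_smul, ← sub_eq_add_neg] at hInF h4 h5
  refine ⟨hInF, h4, h5, ?_⟩
  rw [← fTrStarXi_apply, map_sub, fTrStarXi_apply, fTrStarXi_apply, fTrStar_F8 hacm hn, sub_self]

lemma MemQK.L7 (hacm : ACM n φ ξ η) (hF : MemQK φ ξ η F) : MemQK φ ξ η (L7 n φ e ξ η F) := by
  rw [L7_eq, sub_eq_add_neg, ← neg_smul]
  exact hF.add ((memQK_etaPhiForm hacm).smul _)

lemma L7_smul_add (a : ℝ) : L7 n φ e ξ η (a • F + G) = a • L7 n φ e ξ η F + L7 n φ e ξ η G := by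
  simp only [L7_eq, ← fTrStarXi_apply, map_add, map_smul, smul_eq_mul]
  module

lemma L7_L7 (hacm : ACM n φ ξ η) (hn : n ≠ 0) : L7 n φ e ξ η (L7 n φ e ξ η F) = F := by
  simp only [L7_eq_reflection (fTrStarXi_etaPhiForm hacm hn)]
  exact Module.involutive_reflection _ F

lemma innerF_L7_L7 (hacm : ACM n φ ξ η) (hn : n ≠ 0) (hF : InF φ ξ η F) (hG : InF φ ξ η G) :
    innerF e (L7 n φ e ξ η F) (L7 n φ e ξ η G) = innerF e F G := by
  have hΦ := (memQK_etaPhiForm hacm).1.1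
  rw [L7_eq, L7_eq, innerF_sub_smul_sub_smul, innerF_comm e (etaPhiForm φ η) G,
    innerF_etaPhiForm e hacm hF.1 hF.2.1, innerF_etaPhiForm e hacm hG.1 hG.2.1,
    innerF_etaPhiForm e hacm hΦ.1 hΦ.2.1, fTrStar_etaPhiForm hacm]
  field_simp
  ring

lemma L7_eq_neg_self_iff (hF : InF φ ξ η F) : L7 n φ e ξ η F = -F ↔ MemF3sub n e φ ξ η F := by
  change F - (2 : ℝ) • F8 n φ e ξ η F = -F ↔ _
  refine ⟨fun h => ⟨hF, ?_⟩, fun h => ?_⟩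
  · linear_combination (norm := module) (1 / 2 : ℝ) • h
  · rw [← h.2]; module

lemma fTrStar_L7 (hacm : ACM n φ ξ η) (hn : n ≠ 0) :
    fTrStar φ e (L7 n φ e ξ η F) ξ = -fTrStar φ e F ξ := by
  rw [L7_eq, ← fTrStarXi_apply, map_sub, map_smul, fTrStarXi_apply, fTrStarXi_apply,
    fTrStar_etaPhiForm hacm, smul_eq_mul]
  field_simp
  ring

lemma L7_eq_self_iff (hacm : ACM n φ ξ η) (hn : n ≠ 0) (hF : MemQK φ ξ η F) :
    L7 n φ e ξ η F = F ↔ MemF5sub n e φ ξ η F := by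
  refine ⟨fun h => ⟨hF.1.1, hF.2.1, hF.2.2, ?_⟩, fun h => ?_⟩
  · have := fTrStar_L7 (e := e) (F := F) hacm hn
    rw [h] at this
    linarith
  · rw [L7_eq, h.2.2.2, mul_zero, zero_smul, sub_zero]

end L7

section Decomposition

variable {n : ℕ} {φ : V →ₗ[ℝ] V} {ξ : V} {η : V →ₗ[ℝ] ℝ} {ι : Type*} [Fintype ι]
  {e : OrthonormalBasis ι ℝ V} {F G : V → V → V → ℝ}

lemma eq_F8_of_memF3sub_of_memF5sub {G₃ G₅ : V → V → V → ℝ} (h₃ : MemF3sub n e φ ξ η G₃)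
    (h₅ : MemF5sub n e φ ξ η G₅) (hF : F = G₃ + G₅) : G₃ = F8 n φ e ξ η F := by
  have hτ : fTrStar φ e F ξ = fTrStar φ e G₃ ξ := by
    rw [hF, ← fTrStarXi_apply, map_add, fTrStarXi_apply, fTrStarXi_apply, h₅.2.2.2, add_zero]
  rw [h₃.2, F8_eq_smul, F8_eq_smul, hτ, ← F8_eq_smul, ← h₃.2]

lemma existsUnique_F3_F5 (hacm : ACM n φ ξ η) (hn : n ≠ 0) (hF : MemQK φ ξ η F) :
    ∃! p : (V → V → V → ℝ) × (V → V → V → ℝ),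
      MemF3sub n e φ ξ η p.1 ∧ MemF5sub n e φ ξ η p.2 ∧ F = p.1 + p.2 := by
  refine ⟨(F8 n φ e ξ η F, F - F8 n φ e ξ η F),
    ⟨memF3sub_F8 hacm hn, memF5sub_sub_F8 hacm hn hF, (add_sub_cancel (F8 n φ e ξ η F) F).symm⟩, ?_⟩
  rintro ⟨G₃, G₅⟩ ⟨h₃, h₅, hsum⟩
  have hG₃ := eq_F8_of_memF3sub_of_memF5sub h₃ h₅ hsum
  refine Prod.ext hG₃ ?_
  change G₅ = F - F8 n φ e ξ η F
  rw [← hG₃, hsum, add_sub_cancel_left]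

lemma innerF_eq_zero_of_memF3sub_of_memF5sub (hacm : ACM n φ ξ η) (hF : MemF3sub n e φ ξ η F)
    (hG : MemF5sub n e φ ξ η G) : innerF e F G = 0 := by
  rw [hF.2, F8_eq_smul, innerF_smul_left, innerF_comm, innerF_etaPhiForm e hacm hG.1.1 hG.1.2.1,
    hG.2.2.2, mul_zero, mul_zero]

end Decomposition

section Equivariance

variable {n : ℕ} {φ : V →ₗ[ℝ] V} {ξ : V} {η : V →ₗ[ℝ] ℝ} {ι : Type*} [Fintype ι]
  {e : OrthonormalBasis ι ℝ V} {F : V → V → V → ℝ} {A : V ≃ₗᵢ[ℝ] V}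

lemma fTrStar_actA (hAφ : ∀ x, A (φ x) = φ (A x)) (hAξ : A ξ = ξ) (hF : Trilinear F) :
    fTrStar φ e (actA A F) ξ = fTrStar φ e F ξ := by
  have hφ : ∀ x, A.symm (φ x) = φ (A.symm x) := fun x =>
    A.injective (by rw [hAφ, A.apply_symm_apply, A.apply_symm_apply])
  have hξ : A.symm ξ = ξ := by rw [A.symm_apply_eq, hAξ]
  simp only [fTrStar, actA, hφ, hξ]
  simpa only [OrthonormalBasis.map_apply] using
    e.sum_apply_self_eq (e.map A.symm) (f := fun x y => F x (φ y) ξ) (fun y => hF.1 (φ y) ξ)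
      (fun x => ((hF.2.1 x ξ).mk' _ ∘ₗ φ).isLinear)

lemma L7_actA (hacm : ACM n φ ξ η) (hAφ : ∀ x, A (φ x) = φ (A x)) (hAξ : A ξ = ξ)
    (hF : Trilinear F) : L7 n φ e ξ η (actA A F) = actA A (L7 n φ e ξ η F) := by
  rw [L7_eq, L7_eq, fTrStar_actA hAφ hAξ hF]
  nth_rewrite 1 [← actA_etaPhiForm hacm hAφ hAξ]
  rfl

end Equivariance

theorem stmt15 (n : ℕ) (φ : V →ₗ[ℝ] V) (ξ : V) (η : V →ₗ[ℝ] ℝ)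
    (hacm : ACM n φ ξ η) (hn : 1 ≤ n) (e : OrthonormalBasis (Fin (2 * n + 1)) ℝ V) :
    (∀ F, MemQK φ ξ η F → MemQK φ ξ η (L7 n φ e ξ η F)) ∧
    (∀ (a : ℝ) (F G : V → V → V → ℝ),
      L7 n φ e ξ η (fun x y z => a * F x y z + G x y z) =
        fun x y z => a * L7 n φ e ξ η F x y z + L7 n φ e ξ η G x y z) ∧
    (∀ F, MemQK φ ξ η F → L7 n φ e ξ η (L7 n φ e ξ η F) = F) ∧
    (∀ F G, MemQK φ ξ η F → MemQK φ ξ η G →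
      innerF e (L7 n φ e ξ η F) (L7 n φ e ξ η G) = innerF e F G) ∧
    (∀ A : V ≃ₗᵢ[ℝ] V, (∀ x, A (φ x) = φ (A x)) → A ξ = ξ →
      ∀ F, MemQK φ ξ η F → L7 n φ e ξ η (actA A F) = actA A (L7 n φ e ξ η F)) ∧
    (∀ F, MemQK φ ξ η F →
      (L7 n φ e ξ η F = -F ↔ MemF3sub n e φ ξ η F) ∧
      (L7 n φ e ξ η F = F ↔ MemF5sub n e φ ξ η F)) ∧
    (∀ F, MemQK φ ξ η F →
      MemF3sub n e φ ξ η (F8 n φ e ξ η F) ∧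
      MemF5sub n e φ ξ η (fun x y z => (1 / 4) * (F2 ξ η F x y z +
        F4 φ ξ η F x y z - F5 ξ η F x y z - F6 φ ξ η F x y z -
        4 * F8 n φ e ξ η F x y z)) ∧
      ∀ x y z, F x y z = F8 n φ e ξ η F x y z +
        (1 / 4) * (F2 ξ η F x y z + F4 φ ξ η F x y z - F5 ξ η F x y z -
          F6 φ ξ η F x y z - 4 * F8 n φ e ξ η F x y z)) ∧
    (∀ F, MemQK φ ξ η F →
      ∃! p : (V → V → V → ℝ) × (V → V → V → ℝ),
        MemF3sub n e φ ξ η p.1 ∧ MemF5sub n e φ ξ η p.2 ∧ F = p.1 + p.2) ∧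
    (∀ F G, MemF3sub n e φ ξ η F → MemF5sub n e φ ξ η G → innerF e F G = 0) := by
  have hn : n ≠ 0 := by omega
  refine ⟨fun F hF => hF.L7 hacm, fun a F G => L7_smul_add a, fun F _ => L7_L7 hacm hn,
    fun F G hF hG => innerF_L7_L7 hacm hn hF.1.1 hG.1.1,
    fun A hAφ hAξ F hF => L7_actA hacm hAφ hAξ hF.1.1.1,
    fun F hF => ⟨L7_eq_neg_self_iff hF.1.1, L7_eq_self_iff hacm hn hF⟩,
    fun F hF => ?_, fun F hF => existsUnique_F3_F5 hacm hn hF,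
    fun F G hF hG => innerF_eq_zero_of_memF3sub_of_memF5sub hacm hF hG⟩
  have hcomb := hF.quarter_combination_eq hacm (F8 n φ e ξ η F)
  refine ⟨memF3sub_F8 hacm hn, hcomb ▸ memF5sub_sub_F8 hacm hn hF, fun x y z => ?_⟩
  have h := congrFun₃ hcomb x y z
  simp only [Pi.sub_apply] at h
  rw [h, add_sub_cancel]
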